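/- arXiv:2402.00597 — 2 statements merged into one kernel-verified Lean document; each statement's English description precedes it below -/
import Mathlib

section
/- Let r and s be nonnegative integers, let λ_1,…,λ_r be pairwise distinct nonzero real numbers with |λ_k| < 1, let γ_1,…,γ_s be pairwise distinct real numbers with 0 < γ_k < 1, let φ_1,…,φ_s be real numbers with 0 < φ_k < π, and let c_1,…,c_r, a_1,…,a_s, b_1,…,b_s be real numbers. If Σ_{k=1}^r c_k λ_k^j + Σ_{k=1}^s γ_k^j [a_k cos(j φ_k) + b_k sin(j φ_k)] = 0 for every positive integer j (empty sums are zero), then c_k = 0 for all 1 ≤ k ≤ r and a_k = b_k = 0 for all 1 ≤ k ≤ s. -/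
/-!
Put `z_k = γ_k e^{iφ_k}`, which lies in the open upper half plane. Since
`γ_k^j (a_k cos jφ_k + b_k sin jφ_k) = Re ((a_k - i b_k) z_k^j)`, the hypothesis says that the
power sums `∑ d_i w_i^j` (`j ≥ 1`) vanish for the nonzero nodes `w = (λ_k, z_k, conj z_k)` with
coefficients `d = (2 c_k, a_k - i b_k, a_k + i b_k)`. The nodes are pairwise distinct: they lie on
the real line and in the two open half planes, and `|z_k| = γ_k`. A Vandermonde determinant then
forces `d = 0`.
-/

open Complex ComplexConjugate

theorem eq_zero_of_forall_sum_mul_pow_succ_eq_zero {R ι : Type*} [CommRing R] [IsDomain R]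
    [Fintype ι] {w d : ι → R} (hw : ∀ i, w i ≠ 0) (hinj : Function.Injective w)
    (h : ∀ j : ℕ, 0 < j → ∑ i, d i * w i ^ j = 0) : d = 0 := by
  let e := (Fintype.equivFin ι).symm
  have hdw : (fun i => d (e i) * w (e i)) = 0 := by
    refine Matrix.eq_zero_of_forall_pow_sum_mul_pow_eq_zero (hinj.comp e.injective) fun n => ?_
    rw [← h (n + 1) n.succ_pos, ← e.sum_comp]
    exact Fintype.sum_congr _ _ fun i => by simp only [Function.comp_apply]; ring
  funext i
  simpa [hw i, e] using congrFun hdw (e.symm i)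

theorem ofReal_mul_exp_mul_I_pow (r θ : ℝ) (j : ℕ) :
    ((r : ℂ) * exp (θ * I)) ^ j = (r ^ j : ℝ) * exp ((j * θ : ℝ) * I) := by
  rw [mul_pow, ← exp_nat_mul]
  push_cast
  ring_nf

theorem re_ofReal_mul_exp_mul_I_pow (r θ : ℝ) (j : ℕ) :
    (((r : ℂ) * exp (θ * I)) ^ j).re = r ^ j * Real.cos (j * θ) := by
  rw [ofReal_mul_exp_mul_I_pow, re_ofReal_mul, exp_ofReal_mul_I_re]

theorem im_ofReal_mul_exp_mul_I_pow (r θ : ℝ) (j : ℕ) :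
    (((r : ℂ) * exp (θ * I)) ^ j).im = r ^ j * Real.sin (j * θ) := by
  rw [ofReal_mul_exp_mul_I_pow, im_ofReal_mul, exp_ofReal_mul_I_im]

theorem norm_ofReal_mul_exp_mul_I (r θ : ℝ) : ‖(r : ℂ) * exp (θ * I)‖ = |r| := by
  rw [norm_mul, norm_exp_ofReal_mul_I, norm_real, Real.norm_eq_abs, mul_one]

theorem re_sub_mul_I_mul (a b : ℝ) (u : ℂ) : ((a - b * I) * u).re = a * u.re + b * u.im := by
  simp [sub_mul]

theorem eq_zero_of_forall_sum_pow_add_sum_re_mul_pow_eq_zero {ι κ : Type*}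
    [Fintype ι] [Fintype κ]
    {lam : ι → ℝ} {z : κ → ℂ} (hlam : ∀ k, lam k ≠ 0) (hlam_inj : Function.Injective lam)
    (hz : ∀ k, 0 < (z k).im) (hz_inj : Function.Injective z) {c : ι → ℝ} {e : κ → ℂ}
    (h : ∀ j : ℕ, 0 < j → ∑ k, c k * lam k ^ j + ∑ k, (e k * z k ^ j).re = 0) :
    c = 0 ∧ e = 0 := by
  let w : ι ⊕ (κ ⊕ κ) → ℂ := Sum.elim (fun k => lam k) (Sum.elim z (conj ∘ z))
  let d : ι ⊕ (κ ⊕ κ) → ℂ := Sum.elim (fun k => 2 * c k) (Sum.elim e (conj ∘ e))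
  have hw : ∀ i, w i ≠ 0 := by
    rintro (k | k | k) hk
    · exact hlam k (ofReal_eq_zero.mp hk)
    · have hk : z k = 0 := hk
      simpa [hk] using hz k
    · have hk : conj (z k) = 0 := hk
      simpa [(map_eq_zero _).mp hk] using hz k
  have hw_inj : Function.Injective w := by
    refine (ofReal_injective.comp hlam_inj).sumElim
      (hz_inj.sumElim ((starRingEnd ℂ).injective.comp hz_inj) fun k l hkl => ?_) ?_
    · have := congrArg im hkl
      simp only [Function.comp_apply, conj_im] at this
      linarith [hz k, hz l]
    · rintro k (l | l) hkl <;> have := congrArg im hkl <;>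
        simp only [Function.comp_apply, ofReal_im, Sum.elim_inl, Sum.elim_inr, conj_im] at this <;>
        linarith [hz l]
  have hd : d = 0 := by
    refine eq_zero_of_forall_sum_mul_pow_succ_eq_zero hw hw_inj fun j hj => ?_
    have hsum : ∑ i, d i * w i ^ j =
        2 * ((∑ k, c k * lam k ^ j + ∑ k, (e k * z k ^ j).re : ℝ) : ℂ) := by
      simp only [Fintype.sum_sum_type, w, d, Sum.elim_inl, Sum.elim_inr, Function.comp_apply,
        ← map_pow, ← map_mul, ← Finset.sum_add_distrib, add_conj]
      push_cast [mul_add, Finset.mul_sum, mul_assoc]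
      rfl
    rw [hsum, h j hj, ofReal_zero, mul_zero]
  refine ⟨funext fun k => ?_, funext fun k => congrFun hd (.inr (.inl k))⟩
  simpa [d] using congrFun hd (.inl k)

theorem stmt_6_general (r s : ℕ) (lam : Fin r → ℝ)
    (hne : ∀ k, lam k ≠ 0) (hlaminj : Function.Injective lam)
    (gam phi : Fin s → ℝ)
    (hgam : ∀ k, 0 < gam k ∧ gam k < 1)
    (hphi : ∀ k, 0 < phi k ∧ phi k < Real.pi)
    (hgaminj : Function.Injective gam)
    (c : Fin r → ℝ) (a b : Fin s → ℝ)
    (h : ∀ j : ℕ, 0 < j →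
        (∑ k, c k * lam k ^ j) +
          ∑ k, gam k ^ j * (a k * Real.cos (j * phi k) + b k * Real.sin (j * phi k)) = 0) :
    (∀ k, c k = 0) ∧ ∀ k, a k = 0 ∧ b k = 0 := by
  set z : Fin s → ℂ := fun k => gam k * exp (phi k * I)
  have hz_im : ∀ k, 0 < (z k).im := fun k => by
    simpa [z, im_ofReal_mul_exp_mul_I_pow] using
      mul_pos (hgam k).1 (Real.sin_pos_of_pos_of_lt_pi (hphi k).1 (hphi k).2)
  have hz_inj : Function.Injective z := fun k l hkl => hgaminj <| by
    simpa [z, norm_ofReal_mul_exp_mul_I, abs_of_pos (hgam _).1] using congrArg norm hkl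
  have hre : ∀ (j : ℕ) k, ((a k - b k * I) * z k ^ j).re =
      gam k ^ j * (a k * Real.cos (j * phi k) + b k * Real.sin (j * phi k)) := fun j k => by
    simp only [re_sub_mul_I_mul, z, re_ofReal_mul_exp_mul_I_pow, im_ofReal_mul_exp_mul_I_pow]
    ring
  obtain ⟨hc, hab⟩ :=
    eq_zero_of_forall_sum_pow_add_sum_re_mul_pow_eq_zero hne hlaminj hz_im hz_inj
      (e := fun k => a k - b k * I) fun j hj => by simpa only [hre] using h j hj
  refine ⟨congrFun hc, fun k => ?_⟩
  simpa [Complex.ext_iff] using congrFun hab k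

/-- combined linear independence of `λ_k^j` and `γ_k^j cos/sin(jφ_k)`. -/
theorem stmt_6 (r s : ℕ) (lam : Fin r → ℝ)
    (hne : ∀ k, lam k ≠ 0) (hlt : ∀ k, |lam k| < 1) (hlaminj : Function.Injective lam)
    (gam phi : Fin s → ℝ)
    (hgam : ∀ k, 0 < gam k ∧ gam k < 1)
    (hphi : ∀ k, 0 < phi k ∧ phi k < Real.pi)
    (hgaminj : Function.Injective gam)
    (c : Fin r → ℝ) (a b : Fin s → ℝ)
    (h : ∀ j : ℕ, 0 < j →
        (∑ k, c k * lam k ^ j) +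
          ∑ k, gam k ^ j * (a k * Real.cos (j * phi k) + b k * Real.sin (j * phi k)) = 0) :
    (∀ k, c k = 0) ∧ ∀ k, a k = 0 ∧ b k = 0 :=
  stmt_6_general r s lam hne hlaminj gam phi hgam hphi hgaminj c a b h
end

section
/- Assume that λ_1,…,λ_r are pairwise distinct, γ_1,…,γ_s are pairwise distinct, λ′_1,…,λ′_{r′} are pairwise distinct, γ′_1,…,γ′_{s′} are pairwise distinct, and that all of the matrices G_{0,k} (1 ≤ k ≤ r), G_{1,k}, G_{2,k} (1 ≤ k ≤ s), G′_{0,k} (1 ≤ k ≤ r′), G′_{1,k}, G′_{2,k} (1 ≤ k ≤ s′) are nonzero. If Φ_i = Φ′_i for every integer i ≥ 1, then r = r′, s = s′, and there exist a permutation σ of {1,…,r} and a permutation τ of {1,…,s} such that λ_k = λ′_{σ(k)} and G_{0,k} = G′_{0,σ(k)} for all 1 ≤ k ≤ r, and γ_k = γ′_{τ(k)}, φ_k = φ′_{τ(k)}, G_{1,k} = G′_{1,τ(k)} and G_{2,k} = G′_{2,τ(k)} for all 1 ≤ k ≤ s (this is the identifiability of the parameters, the core of Proposition 1(ii)). -/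
/-- The coefficient matrix `Φ_i` of the proposed multivariate GARCH model, for `i ≥ 1`:
`Φ_i = ∑_{k=1}^r λ_k^{i−1} G_{0,k}
  + ∑_{k=1}^s γ_k^{i−1} [cos((i−1)φ_k) G_{1,k} + sin((i−1)φ_k) G_{2,k}]`. -/
noncomputable def PhiMat (m r s : ℕ) (lam : Fin r → ℝ) (gam phi : Fin s → ℝ)
    (G0 : Fin r → Matrix (Fin m) (Fin m) ℝ)
    (G1 G2 : Fin s → Matrix (Fin m) (Fin m) ℝ) (i : ℕ) :
    Matrix (Fin m) (Fin m) ℝ :=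
  (∑ k, lam k ^ (i - 1) • G0 k) +
    ∑ k, gam k ^ (i - 1) •
      (Real.cos ((i - 1 : ℕ) * phi k) • G1 k + Real.sin ((i - 1 : ℕ) * phi k) • G2 k)

/-!
By de Moivre, `Φ_{n+1} = ∑ λ_k^n G_{0,k} + ∑ (w_k^n A_k + w̄_k^n Ā_k)` with `w_k = γ_k e^{iφ_k}` and
`A_k = (G_{1,k} - i G_{2,k}) / 2`: an exponential sum in `n` whose nodes (the real `λ_k`, the `w_k`
in the open upper half plane and the `w̄_k` in the lower one) are pairwise distinct. Pairing such a
sum with a Lagrange basis polynomial of the nodes isolates a single coefficient, so two equal sums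
with nonzero coefficients have the same nodes carrying the same coefficients. Real nodes can only
match real nodes and upper ones upper ones, and `w_k` determines `(γ_k, φ_k)` because
`φ_k ∈ (0, π)`.
-/

open Complex Finset Function Polynomial

section ExponentialSum

variable {K M ι ι' : Type*} [Field K] [AddCommGroup M] [Module K M] [Fintype ι] [Fintype ι']

theorem sum_eval_smul_eq_sum_coeff_smul_sum_pow_smul (p : K[X]) (μ : ι → K) (C : ι → M) :
    ∑ j, p.eval (μ j) • C j =
      ∑ n ∈ range (p.natDegree + 1), p.coeff n • ∑ j, μ j ^ n • C j := by
  simp only [eval_eq_sum_range, sum_smul, smul_sum, mul_smul]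
  exact sum_comm

theorem exists_eq_of_sum_pow_smul_eq {μ : ι → K} {μ' : ι' → K} (hμ : Injective μ)
    (hμ' : Injective μ') {C : ι → M} {C' : ι' → M} (hC : ∀ j, C j ≠ 0)
    (h : ∀ n : ℕ, ∑ j, μ j ^ n • C j = ∑ j', μ' j' ^ n • C' j') (j : ι) :
    ∃ j', μ' j' = μ j ∧ C' j' = C j := by
  classical
  set S := univ.image μ ∪ univ.image μ'
  set p := Lagrange.basis S id (μ j)
  have hp : ∀ z ∈ S, p.eval z = if z = μ j then 1 else 0 := by
    intro z hz
    split_ifs with hzj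
    · subst hzj
      exact Lagrange.eval_basis_self (v := id) (Set.injOn_id _) hz
    · exact Lagrange.eval_basis_of_ne (v := id) (Ne.symm hzj) hz
  have hC_eq : C j = ∑ j', if μ' j' = μ j then C' j' else 0 := by
    have hpC : ∑ i, p.eval (μ i) • C i = ∑ i', p.eval (μ' i') • C' i' := by
      simp only [sum_eval_smul_eq_sum_coeff_smul_sum_pow_smul, h]
    simpa [hp _ (mem_union_left _ (mem_image_of_mem μ (mem_univ _))),
      hp _ (mem_union_right _ (mem_image_of_mem μ' (mem_univ _))), hμ.eq_iff] using hpC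
  obtain ⟨j', hj'⟩ : ∃ j', μ' j' = μ j := by
    by_contra! hnone
    exact hC j (by simpa [hnone] using hC_eq)
  refine ⟨j', hj', ?_⟩
  rw [hC_eq, Fintype.sum_eq_single j' fun i hi => if_neg fun h => hi (hμ' (h.trans hj'.symm)),
    if_pos hj']

end ExponentialSum

theorem Function.bijective_of_comp_eq {α β γ : Type*} {f : α → γ} {g : β → γ} {u : α → β}
    {v : β → α} (hf : Injective f) (hg : Injective g) (hu : ∀ a, g (u a) = f a)
    (hv : ∀ b, f (v b) = g b) : Bijective u :=
  ⟨fun a₁ a₂ h => hf (by rw [← hu, h, hu]), fun b => ⟨v b, hg (by rw [hu, hv])⟩⟩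

theorem norm_ofReal_mul_exp_mul_I_s9 {γ : ℝ} (hγ : 0 ≤ γ) (φ : ℝ) :
    ‖(γ : ℂ) * exp (φ * I)‖ = γ := by
  simp [norm_exp_ofReal_mul_I, abs_of_nonneg hγ]

theorem im_ofReal_mul_exp_mul_I (γ φ : ℝ) : ((γ : ℂ) * exp (φ * I)).im = γ * Real.sin φ := by
  simp [exp_ofReal_mul_I_re, exp_ofReal_mul_I_im]

theorem eq_of_ofReal_mul_exp_mul_I_eq {γ γ' φ φ' : ℝ} (hγ : 0 < γ) (hγ' : 0 < γ')
    (hφ : φ ∈ Set.Icc 0 Real.pi) (hφ' : φ' ∈ Set.Icc 0 Real.pi)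
    (h : (γ : ℂ) * exp (φ * I) = γ' * exp (φ' * I)) : γ = γ' ∧ φ = φ' := by
  have hγγ' : γ = γ' := by
    rw [← norm_ofReal_mul_exp_mul_I_s9 hγ.le φ, ← norm_ofReal_mul_exp_mul_I_s9 hγ'.le φ', h]
  subst hγγ'
  refine ⟨rfl, Real.injOn_cos hφ hφ' ?_⟩
  have hre := congrArg re h
  simp only [re_ofReal_mul, exp_ofReal_mul_I_re] at hre
  exact mul_left_cancel₀ hγ.ne' hre

theorem ofReal_mul_exp_mul_I_pow_s9 (γ φ : ℝ) (n : ℕ) :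
    ((γ : ℂ) * exp (φ * I)) ^ n = ↑(γ ^ n) * (↑(Real.cos (n * φ)) + ↑(Real.sin (n * φ)) * I) := by
  rw [mul_pow, ← exp_nat_mul, show (n : ℂ) * (φ * I) = ↑(n * φ) * I by push_cast; ring,
    exp_mul_I, ← ofReal_cos, ← ofReal_sin, ofReal_pow]

theorem ofReal_mul_exp_mul_I_pow_add_conj (γ φ x y : ℝ) (n : ℕ) :
    ((γ : ℂ) * exp (φ * I)) ^ n * ((x - y * I) / 2) +
        ((γ : ℂ) * exp (↑(-φ) * I)) ^ n * ((x + y * I) / 2) =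
      ↑(γ ^ n * (Real.cos (n * φ) * x + Real.sin (n * φ) * y)) := by
  simp only [ofReal_mul_exp_mul_I_pow_s9, mul_neg, Real.cos_neg, Real.sin_neg]
  push_cast
  linear_combination (-(γ : ℂ) ^ n * sin (n * φ) * y) * I_sq

namespace PhiMat

variable {m r s : ℕ}

noncomputable def modes (lam : Fin r → ℝ) (gam phi : Fin s → ℝ) : Fin r ⊕ Fin s ⊕ Fin s → ℂ :=
  Sum.elim (fun k => lam k)
    (Sum.elim (fun k => gam k * exp (phi k * I)) fun k => gam k * exp (↑(-phi k) * I))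

noncomputable def coeffs (G0 : Fin r → Matrix (Fin m) (Fin m) ℝ)
    (G1 G2 : Fin s → Matrix (Fin m) (Fin m) ℝ) :
    Fin r ⊕ Fin s ⊕ Fin s → Matrix (Fin m) (Fin m) ℂ :=
  Sum.elim (fun k => (G0 k).map ofReal)
    (Sum.elim (fun k => .of fun a b => (G1 k a b - G2 k a b * I) / 2)
      fun k => .of fun a b => (G1 k a b + G2 k a b * I) / 2)

theorem sum_modes_pow_smul_coeffs (lam : Fin r → ℝ) (gam phi : Fin s → ℝ)
    (G0 : Fin r → Matrix (Fin m) (Fin m) ℝ) (G1 G2 : Fin s → Matrix (Fin m) (Fin m) ℝ) (n : ℕ) :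
    ∑ j, modes lam gam phi j ^ n • coeffs G0 G1 G2 j =
      (PhiMat m r s lam gam phi G0 G1 G2 (n + 1)).map ofReal := by
  ext a b
  simp only [PhiMat, modes, coeffs, Fintype.sum_sum_type, Sum.elim_inl, Sum.elim_inr,
    Nat.add_sub_cancel, Matrix.map_apply, Matrix.add_apply, Matrix.sum_apply, Matrix.smul_apply,
    Matrix.of_apply, smul_eq_mul, ← sum_add_distrib, ofReal_add, ofReal_sum,
    ofReal_mul_exp_mul_I_pow_add_conj]
  push_cast
  rfl

section

variable {lam : Fin r → ℝ} {gam phi : Fin s → ℝ}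

theorem im_modes_inl (k : Fin r) : (modes lam gam phi (.inl k)).im = 0 :=
  ofReal_im _

theorem im_modes_inr_inl_pos {k : Fin s} (hγ : 0 < gam k) (hφ : 0 < phi k ∧ phi k < Real.pi) :
    0 < (modes lam gam phi (.inr (.inl k))).im := by
  rw [modes, Sum.elim_inr, Sum.elim_inl, im_ofReal_mul_exp_mul_I]
  exact mul_pos hγ (Real.sin_pos_of_pos_of_lt_pi hφ.1 hφ.2)

theorem im_modes_inr_inr_neg {k : Fin s} (hγ : 0 < gam k) (hφ : 0 < phi k ∧ phi k < Real.pi) :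
    (modes lam gam phi (.inr (.inr k))).im < 0 := by
  rw [modes, Sum.elim_inr, Sum.elim_inr, im_ofReal_mul_exp_mul_I, Real.sin_neg, mul_neg,
    neg_lt_zero]
  exact mul_pos hγ (Real.sin_pos_of_pos_of_lt_pi hφ.1 hφ.2)

theorem modes_injective (hgam : ∀ k, 0 < gam k) (hphi : ∀ k, 0 < phi k ∧ phi k < Real.pi)
    (hlam : Injective lam) (hgam_inj : Injective gam) : Injective (modes lam gam phi) := by
  have hzero := im_modes_inl (lam := lam) (gam := gam) (phi := phi)
  have hpos k := im_modes_inr_inl_pos (lam := lam) (hgam k) (hphi k)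
  have hneg k := im_modes_inr_inr_neg (lam := lam) (hgam k) (hphi k)
  intro j₁ j₂ h
  have him := congrArg im h
  have hnorm := congrArg norm h
  rcases j₁ with k₁ | k₁ | k₁ <;> rcases j₂ with k₂ | k₂ | k₂ <;>
    simp only [modes, Sum.elim_inl, Sum.elim_inr, norm_ofReal_mul_exp_mul_I_s9 (hgam _).le] at h hnorm
  · rw [hlam (ofReal_injective h)]
  · linarith [hzero k₁, hpos k₂]
  · linarith [hzero k₁, hneg k₂]
  · linarith [hpos k₁, hzero k₂]
  · rw [hgam_inj hnorm]
  · linarith [hpos k₁, hneg k₂]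
  · linarith [hneg k₁, hzero k₂]
  · linarith [hneg k₁, hpos k₂]
  · rw [hgam_inj hnorm]

theorem exists_eq_inl_of_modes_eq_ofReal (hgam : ∀ k, 0 < gam k)
    (hphi : ∀ k, 0 < phi k ∧ phi k < Real.pi) {j : Fin r ⊕ Fin s ⊕ Fin s} {x : ℝ}
    (h : modes lam gam phi j = x) : ∃ k, j = .inl k ∧ lam k = x := by
  have him : (modes lam gam phi j).im = 0 := by rw [h, ofReal_im]
  rcases j with k | k | k
  · exact ⟨k, rfl, ofReal_injective h⟩
  · exact absurd him (im_modes_inr_inl_pos (hgam k) (hphi k)).ne'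
  · exact absurd him (im_modes_inr_inr_neg (hgam k) (hphi k)).ne

theorem exists_eq_inr_inl_of_modes_eq (hgam : ∀ k, 0 < gam k)
    (hphi : ∀ k, 0 < phi k ∧ phi k < Real.pi) {j : Fin r ⊕ Fin s ⊕ Fin s} {γ φ : ℝ}
    (hγ : 0 < γ) (hφ : 0 < φ ∧ φ < Real.pi) (h : modes lam gam phi j = γ * exp (φ * I)) :
    ∃ k, j = .inr (.inl k) ∧ gam k = γ ∧ phi k = φ := by
  have him : 0 < (modes lam gam phi j).im := by
    rw [h, im_ofReal_mul_exp_mul_I]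
    exact mul_pos hγ (Real.sin_pos_of_pos_of_lt_pi hφ.1 hφ.2)
  rcases j with k | k | k
  · exact absurd (im_modes_inl k) him.ne'
  · exact ⟨k, rfl, eq_of_ofReal_mul_exp_mul_I_eq (hgam k) hγ
      ⟨(hphi k).1.le, (hphi k).2.le⟩ ⟨hφ.1.le, hφ.2.le⟩ h⟩
  · exact absurd him (im_modes_inr_inr_neg (hgam k) (hphi k)).not_gt

end

section

variable {G0 : Fin r → Matrix (Fin m) (Fin m) ℝ} {G1 G2 : Fin s → Matrix (Fin m) (Fin m) ℝ}

theorem coeffs_ne_zero (hG0 : ∀ k, G0 k ≠ 0) (hG1 : ∀ k, G1 k ≠ 0) (j : Fin r ⊕ Fin s ⊕ Fin s) :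
    coeffs G0 G1 G2 j ≠ 0 := by
  intro h
  rcases j with k | k | k
  · exact hG0 k (Matrix.map_injective ofReal_injective (h.trans (Matrix.map_zero _ rfl).symm))
  all_goals
    refine hG1 k (Matrix.ext fun a b => ?_)
    simpa [coeffs] using congrArg (fun M => (M a b).re) h

theorem eq_of_coeffs_inr_inl_eq {r' s' : ℕ} {G0' : Fin r' → Matrix (Fin m) (Fin m) ℝ}
    {G1' G2' : Fin s' → Matrix (Fin m) (Fin m) ℝ}
    {k : Fin s} {k' : Fin s'}
    (h : coeffs G0 G1 G2 (.inr (.inl k)) = coeffs G0' G1' G2' (.inr (.inl k'))) :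
    G1 k = G1' k' ∧ G2 k = G2' k' := by
  constructor <;> ext a b
  · simpa [coeffs] using congrArg (fun M => (M a b).re) h
  · simpa [coeffs] using congrArg (fun M => (M a b).im) h

end

section

variable {r' s' : ℕ} {lam : Fin r → ℝ} {gam phi : Fin s → ℝ}
  {G0 : Fin r → Matrix (Fin m) (Fin m) ℝ} {G1 G2 : Fin s → Matrix (Fin m) (Fin m) ℝ}
  {lam' : Fin r' → ℝ} {gam' phi' : Fin s' → ℝ}
  {G0' : Fin r' → Matrix (Fin m) (Fin m) ℝ} {G1' G2' : Fin s' → Matrix (Fin m) (Fin m) ℝ}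

theorem exists_modes_eq_and_coeffs_eq
    (hgam : ∀ k, 0 < gam k) (hphi : ∀ k, 0 < phi k ∧ phi k < Real.pi)
    (hgam' : ∀ k, 0 < gam' k) (hphi' : ∀ k, 0 < phi' k ∧ phi' k < Real.pi)
    (hlam_inj : Injective lam) (hgam_inj : Injective gam)
    (hlam_inj' : Injective lam') (hgam_inj' : Injective gam')
    (hG0 : ∀ k, G0 k ≠ 0) (hG1 : ∀ k, G1 k ≠ 0)
    (heq : ∀ i : ℕ, 1 ≤ i →
      PhiMat m r s lam gam phi G0 G1 G2 i = PhiMat m r' s' lam' gam' phi' G0' G1' G2' i)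
    (j : Fin r ⊕ Fin s ⊕ Fin s) :
    ∃ j', modes lam' gam' phi' j' = modes lam gam phi j ∧
      coeffs G0' G1' G2' j' = coeffs G0 G1 G2 j :=
  exists_eq_of_sum_pow_smul_eq (modes_injective hgam hphi hlam_inj hgam_inj)
    (modes_injective hgam' hphi' hlam_inj' hgam_inj') (coeffs_ne_zero hG0 hG1)
    (fun n => by rw [sum_modes_pow_smul_coeffs, sum_modes_pow_smul_coeffs, heq _ n.succ_pos]) j

theorem exists_lam_eq_and_G0_eq (hgam' : ∀ k, 0 < gam' k)
    (hphi' : ∀ k, 0 < phi' k ∧ phi' k < Real.pi)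
    (hmatch : ∀ j, ∃ j', modes lam' gam' phi' j' = modes lam gam phi j ∧
      coeffs G0' G1' G2' j' = coeffs G0 G1 G2 j) (k : Fin r) :
    ∃ k', lam' k' = lam k ∧ G0' k' = G0 k := by
  obtain ⟨j', hmode, hcoeff⟩ := hmatch (.inl k)
  obtain ⟨k', rfl, hlam⟩ := exists_eq_inl_of_modes_eq_ofReal hgam' hphi' hmode
  exact ⟨k', hlam, Matrix.map_injective ofReal_injective hcoeff⟩

theorem exists_gam_eq_and_phi_eq_and_G1_eq_and_G2_eq
    (hgam : ∀ k, 0 < gam k) (hphi : ∀ k, 0 < phi k ∧ phi k < Real.pi)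
    (hgam' : ∀ k, 0 < gam' k) (hphi' : ∀ k, 0 < phi' k ∧ phi' k < Real.pi)
    (hmatch : ∀ j, ∃ j', modes lam' gam' phi' j' = modes lam gam phi j ∧
      coeffs G0' G1' G2' j' = coeffs G0 G1 G2 j) (k : Fin s) :
    ∃ k', gam' k' = gam k ∧ phi' k' = phi k ∧ G1' k' = G1 k ∧ G2' k' = G2 k := by
  obtain ⟨j', hmode, hcoeff⟩ := hmatch (.inr (.inl k))
  obtain ⟨k', rfl, hgam_eq, hphi_eq⟩ :=
    exists_eq_inr_inl_of_modes_eq hgam' hphi' (hgam k) (hphi k) hmode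
  exact ⟨k', hgam_eq, hphi_eq, eq_of_coeffs_inr_inl_eq hcoeff⟩

end

end PhiMat

theorem stmt_9_general (m r s r' s' : ℕ)
    (lam : Fin r → ℝ) (gam phi : Fin s → ℝ)
    (G0 : Fin r → Matrix (Fin m) (Fin m) ℝ)
    (G1 G2 : Fin s → Matrix (Fin m) (Fin m) ℝ)
    (lam' : Fin r' → ℝ) (gam' phi' : Fin s' → ℝ)
    (G0' : Fin r' → Matrix (Fin m) (Fin m) ℝ)
    (G1' G2' : Fin s' → Matrix (Fin m) (Fin m) ℝ)
    (hgam0 : ∀ k, 0 < gam k)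
    (hphi : ∀ k, 0 < phi k ∧ phi k < Real.pi)
    (hgam0' : ∀ k, 0 < gam' k)
    (hphi' : ∀ k, 0 < phi' k ∧ phi' k < Real.pi)
    (hlaminj : Function.Injective lam) (hgaminj : Function.Injective gam)
    (hlaminj' : Function.Injective lam') (hgaminj' : Function.Injective gam')
    (hG0 : ∀ k, G0 k ≠ 0) (hG1 : ∀ k, G1 k ≠ 0)
    (hG0' : ∀ k, G0' k ≠ 0) (hG1' : ∀ k, G1' k ≠ 0)
    (heq : ∀ i : ℕ, 1 ≤ i →
      PhiMat m r s lam gam phi G0 G1 G2 i = PhiMat m r' s' lam' gam' phi' G0' G1' G2' i) :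
    r = r' ∧ s = s' ∧
      ∃ (σ : Fin r ≃ Fin r') (τ : Fin s ≃ Fin s'),
        (∀ k, lam k = lam' (σ k) ∧ G0 k = G0' (σ k)) ∧
        ∀ k, gam k = gam' (τ k) ∧ phi k = phi' (τ k) ∧
          G1 k = G1' (τ k) ∧ G2 k = G2' (τ k) := by
  have hmatch := PhiMat.exists_modes_eq_and_coeffs_eq hgam0 hphi hgam0' hphi' hlaminj hgaminj
    hlaminj' hgaminj' hG0 hG1 heq
  have hmatch' := PhiMat.exists_modes_eq_and_coeffs_eq hgam0' hphi' hgam0 hphi hlaminj' hgaminj'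
    hlaminj hgaminj hG0' hG1' fun i hi => (heq i hi).symm
  choose σ hσlam hσG0 using PhiMat.exists_lam_eq_and_G0_eq hgam0' hphi' hmatch
  choose σ' hσ'lam _ using PhiMat.exists_lam_eq_and_G0_eq hgam0 hphi hmatch'
  choose τ hτgam hτphi hτG1 hτG2 using
    PhiMat.exists_gam_eq_and_phi_eq_and_G1_eq_and_G2_eq hgam0 hphi hgam0' hphi' hmatch
  choose τ' hτ'gam _ _ _ using
    PhiMat.exists_gam_eq_and_phi_eq_and_G1_eq_and_G2_eq hgam0' hphi' hgam0 hphi hmatch'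
  let eσ := Equiv.ofBijective σ (bijective_of_comp_eq hlaminj hlaminj' hσlam hσ'lam)
  let eτ := Equiv.ofBijective τ (bijective_of_comp_eq hgaminj hgaminj' hτgam hτ'gam)
  exact ⟨by simpa using Fintype.card_congr eσ, by simpa using Fintype.card_congr eτ, eσ, eτ,
    fun k => ⟨(hσlam k).symm, (hσG0 k).symm⟩,
    fun k => ⟨(hτgam k).symm, (hτphi k).symm, (hτG1 k).symm, (hτG2 k).symm⟩⟩

/-- identifiability of the parameters: if the two parameterizations give
the same coefficient matrices `Φ_i` for all `i ≥ 1`, then `r = r'`, `s = s'` and the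
parameters agree up to permutations. -/
theorem stmt_9 (m r s r' s' : ℕ) (hm : 0 < m)
    (lam : Fin r → ℝ) (gam phi : Fin s → ℝ)
    (G0 : Fin r → Matrix (Fin m) (Fin m) ℝ)
    (G1 G2 : Fin s → Matrix (Fin m) (Fin m) ℝ)
    (lam' : Fin r' → ℝ) (gam' phi' : Fin s' → ℝ)
    (G0' : Fin r' → Matrix (Fin m) (Fin m) ℝ)
    (G1' G2' : Fin s' → Matrix (Fin m) (Fin m) ℝ)
    (hlam0 : ∀ k, 0 < |lam k|) (hlam1 : ∀ k, |lam k| < 1)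
    (hgam0 : ∀ k, 0 < gam k) (hgam1 : ∀ k, gam k < 1)
    (hphi : ∀ k, 0 < phi k ∧ phi k < Real.pi)
    (hlam0' : ∀ k, 0 < |lam' k|) (hlam1' : ∀ k, |lam' k| < 1)
    (hgam0' : ∀ k, 0 < gam' k) (hgam1' : ∀ k, gam' k < 1)
    (hphi' : ∀ k, 0 < phi' k ∧ phi' k < Real.pi)
    (hlaminj : Function.Injective lam) (hgaminj : Function.Injective gam)
    (hlaminj' : Function.Injective lam') (hgaminj' : Function.Injective gam')
    (hG0 : ∀ k, G0 k ≠ 0) (hG1 : ∀ k, G1 k ≠ 0) (hG2 : ∀ k, G2 k ≠ 0)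
    (hG0' : ∀ k, G0' k ≠ 0) (hG1' : ∀ k, G1' k ≠ 0) (hG2' : ∀ k, G2' k ≠ 0)
    (heq : ∀ i : ℕ, 1 ≤ i →
      PhiMat m r s lam gam phi G0 G1 G2 i = PhiMat m r' s' lam' gam' phi' G0' G1' G2' i) :
    r = r' ∧ s = s' ∧
      ∃ (σ : Fin r ≃ Fin r') (τ : Fin s ≃ Fin s'),
        (∀ k, lam k = lam' (σ k) ∧ G0 k = G0' (σ k)) ∧
        ∀ k, gam k = gam' (τ k) ∧ phi k = phi' (τ k) ∧
          G1 k = G1' (τ k) ∧ G2 k = G2' (τ k) :=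
  stmt_9_general m r s r' s' lam gam phi G0 G1 G2 lam' gam' phi' G0' G1' G2' hgam0 hphi hgam0' hphi'
    hlaminj hgaminj hlaminj' hgaminj' hG0 hG1 hG0' hG1' heq
end
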